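/- Define F(m, j) = C(m, j)² + 2·∑_{k=1}^{j} (-1)^k · C(m, j-k) · C(m, j+k). Then for all natural numbers m ≥ 1 and j, F(m, j) = C(m, j). -/

import Mathlib

/-!
Comparing coefficients of `X ^ (2 * j)` in `(1 - X) ^ m * (1 + X) ^ m = (1 - X ^ 2) ^ m` gives the
alternating Vandermonde identity `∑ i, (-1) ^ i * C(m, i) * C(m, 2j - i) = (-1) ^ j * C(m, j)`.
Folding that sum around its middle term `i = j`, the terms `i = j ∓ k` pair up to
`2 * (-1) ^ j * (-1) ^ k * C(m, j - k) * C(m, j + k)`, so the alternating sum is `(-1) ^ j * F(m, j)`.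
-/

open Polynomial Finset

theorem coeff_one_sub_X_pow {R : Type*} [CommRing R] (m k : ℕ) :
    ((1 - X : R[X]) ^ m).coeff k = (-1) ^ k * m.choose k := by
  rw [sub_eq_neg_add, add_pow, finsetSum_coeff]
  simp_rw [neg_pow (X : R[X]), one_pow, mul_one, ← C_eq_natCast, ← C_1, ← C_neg, ← C_pow,
    mul_comm _ (C _), ← mul_assoc, ← C_mul, coeff_C_mul_X_pow]
  rw [sum_ite_eq]
  split_ifs with hk
  · ring
  · rw [Nat.choose_eq_zero_of_lt (by simpa using hk)]
    simp

theorem coeff_one_sub_X_sq_pow_two_mul {R : Type*} [CommRing R] (m j : ℕ) :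
    ((1 - X ^ 2 : R[X]) ^ m).coeff (2 * j) = (-1) ^ j * m.choose j := by
  have h : (1 - X ^ 2 : R[X]) ^ m = expand R 2 ((1 - X) ^ m) := by simp
  rw [h, coeff_expand_mul' two_pos, coeff_one_sub_X_pow]

theorem sum_range_neg_one_pow_mul_choose_mul_choose {R : Type*} [CommRing R] (m j : ℕ) :
    ∑ i ∈ range (2 * j + 1), (-1 : R) ^ i * m.choose i * m.choose (2 * j - i) =
      (-1) ^ j * m.choose j := by
  have h : (1 - X : R[X]) ^ m * (1 + X) ^ m = (1 - X ^ 2) ^ m := by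
    rw [← mul_pow]
    ring
  rw [← coeff_one_sub_X_sq_pow_two_mul, ← h, coeff_mul, Nat.sum_antidiagonal_eq_sum_range_succ_mk]
  simp only [coeff_one_sub_X_pow, coeff_one_add_X_pow]

theorem sum_range_two_mul_add_one_eq {M : Type*} [AddCommMonoid M] (g : ℕ → M) (j : ℕ) :
    ∑ i ∈ range (2 * j + 1), g i = g j + ∑ k ∈ Icc 1 j, (g (j - k) + g (j + k)) := by
  induction j generalizing g with
  | zero => simp
  | succ j ih =>
    rw [show 2 * (j + 1) + 1 = 2 * j + 1 + 1 + 1 by ring, sum_range_succ, sum_range_succ', ih,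
      sum_Icc_succ_top (by omega)]
    have hshift : ∀ k ∈ Icc 1 j,
        g (j - k + 1) + g (j + k + 1) = g (j + 1 - k) + g (j + 1 + k) := by
      intro k hk
      have hkj : k ≤ j := (mem_Icc.mp hk).2
      rw [show j - k + 1 = j + 1 - k by omega, add_right_comm]
    rw [sum_congr rfl hshift, show 2 * j + 1 + 1 = j + 1 + (j + 1) by ring, Nat.sub_self]
    abel

theorem neg_one_pow_sub_eq_mul {R : Type*} [Monoid R] [HasDistribNeg R] {j k : ℕ} (hkj : k ≤ j) :
    (-1 : R) ^ (j - k) = (-1) ^ j * (-1) ^ k := by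
  have hj : (-1 : R) ^ j = (-1) ^ (j - k) * (-1) ^ k := by
    rw [← pow_add, Nat.sub_add_cancel hkj]
  rw [hj, mul_assoc, ← pow_add, Even.neg_one_pow ⟨k, rfl⟩, mul_one]

theorem stmt_4_general (m j : ℕ) :
    ((m.choose j : ℤ)) ^ 2 +
      2 * ∑ k ∈ Finset.Icc 1 j,
        (-1 : ℤ) ^ k * (m.choose (j - k)) * (m.choose (j + k)) =
    (m.choose j : ℤ) := by
  have hpair : ∀ k ∈ Icc 1 j,
      (-1 : ℤ) ^ (j - k) * m.choose (j - k) * m.choose (2 * j - (j - k)) +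
        (-1) ^ (j + k) * m.choose (j + k) * m.choose (2 * j - (j + k)) =
      (-1) ^ j * (2 * ((-1) ^ k * m.choose (j - k) * m.choose (j + k))) := by
    intro k hk
    have hkj : k ≤ j := (mem_Icc.mp hk).2
    rw [show 2 * j - (j - k) = j + k by omega, show 2 * j - (j + k) = j - k by omega,
      neg_one_pow_sub_eq_mul hkj, pow_add]
    ring
  have h := sum_range_neg_one_pow_mul_choose_mul_choose (R := ℤ) m j
  rw [sum_range_two_mul_add_one_eq, sum_congr rfl hpair, ← mul_sum, ← mul_sum, two_mul j,
    Nat.add_sub_cancel] at h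
  refine mul_left_cancel₀ (pow_ne_zero j (by norm_num : (-1 : ℤ) ≠ 0)) ?_
  linear_combination h

theorem stmt_4 (m j : ℕ) (hm : 1 ≤ m) :
    ((m.choose j : ℤ)) ^ 2 +
      2 * ∑ k ∈ Finset.Icc 1 j,
        (-1 : ℤ) ^ k * (m.choose (j - k)) * (m.choose (j + k)) =
    (m.choose j : ℤ) :=
  stmt_4_general m j
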